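/- Fix χ ∈ C^∞(ℝ) with χ(u) = 0 for u ≤ 1 and χ(u) = 1 for u ≥ 2, and for s > 0 and r > 0 define T_{s,r} : C^∞_0(B̄_r) → C^∞_0(B̄_r) by (T_{s,r} f)(x) := χ(s·|x|/r) · f(x). Then for all n, k, j ∈ ℕ there exist constants C = C(n,k,j,r) > 0, depending continuously on r, such that for all f ∈ C^∞_0(B̄_r) and all s > 0: ⟨T_{s,r}(f)⟩_{n,k+j,r} ≤ C · s^j · ⟨f⟩_{n,k,r} and ⟨(T_{s,r} − id)(f)⟩_{n,k,r} ≤ C · s^{-j} · ⟨f⟩_{n,k+j,r}. -/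

import Mathlib

open Metric Set

/-- Membership in `C^∞₀(B̄_r)`: smooth on the closed ball and flat at the origin. -/
def FlatSmoothOnBall (m : ℕ) (r : ℝ) (f : EuclideanSpace ℝ (Fin m) → ℝ) : Prop :=
  ContDiffOn ℝ (⊤ : ℕ∞) f (closedBall 0 r) ∧
    ∀ i : ℕ, iteratedFDerivWithin ℝ i f (closedBall 0 r) 0 = 0

/-- The weighted norm `⟨f⟩_{n,k,r}` on flat functions on the closed ball. -/
noncomputable def flatNorm (m : ℕ) (r : ℝ) (n k : ℕ)
    (f : EuclideanSpace ℝ (Fin m) → ℝ) : ℝ :=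
  ⨆ p : (closedBall (0 : EuclideanSpace ℝ (Fin m)) r \ {0} :
      Set (EuclideanSpace ℝ (Fin m))) × Fin (n + 1),
    ‖(p.1 : EuclideanSpace ℝ (Fin m))‖ ^ (-(k : ℤ)) *
      ‖iteratedFDerivWithin ℝ p.2 f (closedBall 0 r) p.1‖

/-!
Flatness at the origin turns the weighted norms into Taylor-type bounds: by the mean value
inequality on the balls `closedBall 0 ‖x‖`, `‖Dⁱ f x‖ ≤ ⟨f⟩_{n,k} ‖x‖^(k+l)` whenever `i + l ≤ n`.
The multiplier `x ↦ χ (c ‖x‖)` has `l`-th derivative bounded by `K ‖x‖⁻ˡ` with `K` independent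
of `c`, so by the Leibniz rule it changes each weighted bound by a factor at most `2ⁿ K`.
With `c = s / r`, `χ (c ‖·‖)` vanishes where `‖x‖ < r / s`, and trading `‖x‖⁻ʲ` for `(s / r)ʲ`
there gives the first estimate; `χ (c ‖·‖) - 1` vanishes where `‖x‖ > 2 r / s`, and trading
`‖x‖ʲ` for `(2 r / s)ʲ` there gives the second.
-/

open Filter Topology

section Flat

variable {E F : Type*} [NormedAddCommGroup E] [NormedSpace ℝ E] [NormedAddCommGroup F]
  [NormedSpace ℝ F] {f : E → F} {r : ℝ}

theorem uniqueDiffOn_closedBall (x : E) (hr : 0 < r) : UniqueDiffOn ℝ (closedBall x r) :=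
  uniqueDiffOn_convex (convex_closedBall x r)
    (by rw [interior_closedBall x hr.ne']; exact nonempty_ball.2 hr)

theorem norm_iteratedFDerivWithin_le_mul_pow_of_flat (hr : 0 < r)
    (hf : ContDiffOn ℝ (⊤ : ℕ∞) f (closedBall 0 r))
    (hflat : ∀ i : ℕ, iteratedFDerivWithin ℝ i f (closedBall 0 r) 0 = 0)
    (l i : ℕ) {x : E} (hx : x ∈ closedBall (0 : E) r) {D : ℝ}
    (hD : ∀ y ∈ closedBall (0 : E) ‖x‖,
      ‖iteratedFDerivWithin ℝ (i + l) f (closedBall 0 r) y‖ ≤ D) :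
    ‖iteratedFDerivWithin ℝ i f (closedBall 0 r) x‖ ≤ D * ‖x‖ ^ l := by
  induction l generalizing i x D with
  | zero => simpa using hD x (mem_closedBall_zero_iff.2 le_rfl)
  | succ l ih =>
    set B := closedBall (0 : E) r
    have hsub : closedBall (0 : E) ‖x‖ ⊆ B :=
      closedBall_subset_closedBall (mem_closedBall_zero_iff.1 hx)
    have hD0 : 0 ≤ D := by simpa [hflat] using hD 0 (mem_closedBall_self (norm_nonneg x))
    have hderiv : ∀ y ∈ closedBall (0 : E) ‖x‖, HasFDerivWithinAt
        (iteratedFDerivWithin ℝ i f B) (fderivWithin ℝ (iteratedFDerivWithin ℝ i f B) B y)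
        (closedBall 0 ‖x‖) y := fun y hy =>
      ((hf.differentiableOn_iteratedFDerivWithin (by exact_mod_cast WithTop.coe_lt_top i)
        (uniqueDiffOn_closedBall 0 hr)) y (hsub hy)).hasFDerivWithinAt.mono hsub
    have hbound : ∀ y ∈ closedBall (0 : E) ‖x‖,
        ‖fderivWithin ℝ (iteratedFDerivWithin ℝ i f B) B y‖ ≤ D * ‖x‖ ^ l := by
      intro y hy
      have hyx : ‖y‖ ≤ ‖x‖ := mem_closedBall_zero_iff.1 hy
      rw [norm_fderivWithin_iteratedFDerivWithin]
      calc _ ≤ D * ‖y‖ ^ l := ih (i + 1) (hsub hy)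
              fun z hz => by
                rw [show i + 1 + l = i + (l + 1) by omega]
                exact hD z (closedBall_subset_closedBall hyx hz)
        _ ≤ D * ‖x‖ ^ l := by gcongr
    have hmvt := (convex_closedBall (0 : E) ‖x‖).norm_image_sub_le_of_norm_hasFDerivWithin_le
      hderiv hbound (mem_closedBall_self (norm_nonneg x))
      (mem_closedBall_zero_iff.2 le_rfl)
    rw [hflat, sub_zero, sub_zero] at hmvt
    rwa [pow_succ, ← mul_assoc]

end Flat

theorem zpow_neg_natCast_mul_le_iff {t a M : ℝ} (k : ℕ) (ht : 0 < t) :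
    t ^ (-(k : ℤ)) * a ≤ M ↔ a ≤ M * t ^ k := by
  rw [zpow_neg, zpow_natCast, inv_mul_le_iff₀ (by positivity), mul_comm]

section FlatNorm

variable {m : ℕ} {r : ℝ} {n k : ℕ} {f : EuclideanSpace ℝ (Fin m) → ℝ}

theorem flatNorm_nonneg : 0 ≤ flatNorm m r n k f :=
  Real.iSup_nonneg fun _ => by positivity

theorem flatNorm_le_of_forall_le {M : ℝ} (hM : 0 ≤ M)
    (h : ∀ x ∈ closedBall (0 : EuclideanSpace ℝ (Fin m)) r, x ≠ 0 → ∀ i ≤ n,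
      ‖iteratedFDerivWithin ℝ i f (closedBall 0 r) x‖ ≤ M * ‖x‖ ^ k) :
    flatNorm m r n k f ≤ M := by
  refine Real.iSup_le (fun ⟨⟨x, hxB, hx0⟩, i⟩ => ?_) hM
  rw [zpow_neg_natCast_mul_le_iff k (norm_pos_iff.2 hx0)]
  exact h x hxB hx0 i (Nat.lt_succ_iff.1 i.isLt)

theorem bddAbove_range_flatNorm (hr : 0 < r) (hf : FlatSmoothOnBall m r f) :
    BddAbove (range fun p : (closedBall (0 : EuclideanSpace ℝ (Fin m)) r \ {0} :
        Set (EuclideanSpace ℝ (Fin m))) × Fin (n + 1) =>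
      ‖(p.1 : EuclideanSpace ℝ (Fin m))‖ ^ (-(k : ℤ)) *
        ‖iteratedFDerivWithin ℝ p.2 f (closedBall 0 r) p.1‖) := by
  have hbound (i : ℕ) : ∃ D, ∀ y ∈ closedBall (0 : EuclideanSpace ℝ (Fin m)) r,
      ‖iteratedFDerivWithin ℝ (i + k) f (closedBall 0 r) y‖ ≤ D :=
    (isCompact_closedBall _ r).exists_bound_of_continuousOn <|
      hf.1.continuousOn_iteratedFDerivWithin (by exact_mod_cast le_top)
        (uniqueDiffOn_closedBall 0 hr)
  choose D hD using hbound
  obtain ⟨M, hM⟩ := Finite.exists_le fun i : Fin (n + 1) => D i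
  refine ⟨M, forall_mem_range.2 fun ⟨⟨x, hxB, hx0⟩, i⟩ => ?_⟩
  rw [zpow_neg_natCast_mul_le_iff k (norm_pos_iff.2 hx0)]
  calc _ ≤ D i * ‖x‖ ^ k := norm_iteratedFDerivWithin_le_mul_pow_of_flat hr hf.1 hf.2 k i hxB
          fun y hy => hD i y (closedBall_subset_closedBall (mem_closedBall_zero_iff.1 hxB) hy)
    _ ≤ M * ‖x‖ ^ k := by gcongr; exact hM i

theorem norm_iteratedFDerivWithin_le_flatNorm_mul_pow (hr : 0 < r) (hf : FlatSmoothOnBall m r f)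
    {i : ℕ} (hi : i ≤ n) {x : EuclideanSpace ℝ (Fin m)} (hx : x ∈ closedBall 0 r) :
    ‖iteratedFDerivWithin ℝ i f (closedBall 0 r) x‖ ≤ flatNorm m r n k f * ‖x‖ ^ k := by
  rcases eq_or_ne x 0 with rfl | hx0
  · rw [hf.2, norm_zero]
    exact mul_nonneg flatNorm_nonneg (by positivity)
  rw [← zpow_neg_natCast_mul_le_iff k (norm_pos_iff.2 hx0)]
  exact le_ciSup (bddAbove_range_flatNorm hr hf) (⟨x, hx, hx0⟩, ⟨i, Nat.lt_succ_of_le hi⟩)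

theorem norm_iteratedFDerivWithin_le_flatNorm_mul_pow_add (hr : 0 < r)
    (hf : FlatSmoothOnBall m r f) {i l : ℕ} (hil : i + l ≤ n) {x : EuclideanSpace ℝ (Fin m)}
    (hx : x ∈ closedBall 0 r) :
    ‖iteratedFDerivWithin ℝ i f (closedBall 0 r) x‖ ≤ flatNorm m r n k f * ‖x‖ ^ (k + l) := by
  rw [pow_add, ← mul_assoc]
  refine norm_iteratedFDerivWithin_le_mul_pow_of_flat hr hf.1 hf.2 l i hx fun y hy => ?_
  have hyx : ‖y‖ ≤ ‖x‖ := mem_closedBall_zero_iff.1 hy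
  calc _ ≤ flatNorm m r n k f * ‖y‖ ^ k := norm_iteratedFDerivWithin_le_flatNorm_mul_pow hr hf
          hil (closedBall_subset_closedBall (mem_closedBall_zero_iff.1 hx) hy)
    _ ≤ flatNorm m r n k f * ‖x‖ ^ k := mul_le_mul_of_nonneg_left (by gcongr) flatNorm_nonneg

end FlatNorm

theorem contDiff_comp_norm_of_eq_on_le_one {E : Type*} [NormedAddCommGroup E]
    [InnerProductSpace ℝ E] {χ : ℝ → ℝ} (hχ : ContDiff ℝ (⊤ : ℕ∞) χ) {b : ℝ}
    (hχb : ∀ u ≤ 1, χ u = b) : ContDiff ℝ (⊤ : ℕ∞) fun z : E => χ ‖z‖ := by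
  refine contDiff_iff_contDiffAt.2 fun x => ?_
  rcases lt_or_ge ‖x‖ 1 with hx | hx
  · refine (contDiffAt_const (c := b)).congr_of_eventuallyEq ?_
    filter_upwards [(isOpen_lt continuous_norm continuous_const).mem_nhds hx] with z hz
    exact hχb _ (le_of_lt hz)
  · exact hχ.contDiffAt.comp x (contDiffAt_norm ℝ (by rintro rfl; norm_num at hx))

theorem exists_norm_iteratedFDeriv_mul_pow_le {E F : Type*} [NormedAddCommGroup E]
    [NormedSpace ℝ E] [ProperSpace E] [NormedAddCommGroup F] [NormedSpace ℝ F] {ψ : E → F}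
    (hψ : ContDiff ℝ (⊤ : ℕ∞) ψ) {R : ℝ} {a : F} (hψa : ∀ z : E, R < ‖z‖ → ψ z = a) (n : ℕ) :
    ∃ K, 0 < K ∧ ∀ l ≤ n, ∀ z, ‖iteratedFDeriv ℝ l ψ z‖ * ‖z‖ ^ l ≤ K := by
  have hbound (l : ℕ) : ∃ K, ∀ z, ‖iteratedFDeriv ℝ l ψ z‖ * ‖z‖ ^ l ≤ K := by
    obtain ⟨K, hK⟩ := (isCompact_closedBall (0 : E) R).exists_bound_of_continuousOn
      (f := fun z => ‖iteratedFDeriv ℝ l ψ z‖ * ‖z‖ ^ l)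
      (by have := hψ.continuous_iteratedFDeriv (m := l) (by exact_mod_cast le_top); fun_prop)
    refine ⟨max K ‖a‖, fun z => ?_⟩
    rcases le_or_gt ‖z‖ R with hz | hz
    · exact (le_abs_self _).trans ((hK z (mem_closedBall_zero_iff.2 hz)).trans (le_max_left _ _))
    have hloc : ψ =ᶠ[𝓝 z] fun _ => a := by
      filter_upwards [(isOpen_lt continuous_const continuous_norm).mem_nhds hz] with w hw
      exact hψa w hw
    rw [(hloc.iteratedFDeriv ℝ l).eq_of_nhds]
    rcases l with _ | l
    · simp
    · simp [iteratedFDeriv_const_of_ne]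
  choose K hK using hbound
  obtain ⟨M, hM⟩ := Finite.exists_le fun l : Fin (n + 1) => K l
  exact ⟨max M 1, by positivity, fun l hl z =>
    (hK l z).trans ((hM ⟨l, Nat.lt_succ_of_le hl⟩).trans (le_max_left _ _))⟩

theorem norm_iteratedFDeriv_comp_smul_mul_pow {𝕜 E F : Type*} [NontriviallyNormedField 𝕜]
    [NormedAddCommGroup E] [NormedSpace 𝕜 E] [NormedAddCommGroup F] [NormedSpace 𝕜 F]
    {ψ : E → F} {l : ℕ} (hψ : ContDiff 𝕜 l ψ) (c : 𝕜) (x : E) :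
    ‖iteratedFDeriv 𝕜 l (fun y => ψ (c • y)) x‖ * ‖x‖ ^ l =
      ‖iteratedFDeriv 𝕜 l ψ (c • x)‖ * ‖c • x‖ ^ l := by
  rw [iteratedFDeriv_comp_const_smul c hψ, norm_smul, norm_smul, norm_pow, mul_pow]
  ring

theorem iteratedFDerivWithin_eq_zero_of_eventuallyEq_zero {𝕜 E F : Type*}
    [NontriviallyNormedField 𝕜] [NormedAddCommGroup E] [NormedSpace 𝕜 E] [NormedAddCommGroup F]
    [NormedSpace 𝕜 F] {g : E → F} {s : Set E} {x : E} (h : g =ᶠ[𝓝 x] 0) (i : ℕ) :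
    iteratedFDerivWithin 𝕜 i g s x = 0 := by
  rw [(h.filter_mono nhdsWithin_le_nhds).iteratedFDerivWithin_eq h.self_of_nhds,
    iteratedFDerivWithin_zero]
  rfl

section Multiplier

variable {m : ℕ} {r : ℝ} {n k : ℕ} {f : EuclideanSpace ℝ (Fin m) → ℝ}

theorem norm_iteratedFDerivWithin_mul_le_flatNorm_mul_pow (hr : 0 < r)
    (hf : FlatSmoothOnBall m r f) {g : EuclideanSpace ℝ (Fin m) → ℝ}
    (hg : ContDiff ℝ (⊤ : ℕ∞) g) {K : ℝ}
    (hgK : ∀ l ≤ n, ∀ y, ‖iteratedFDeriv ℝ l g y‖ * ‖y‖ ^ l ≤ K) {i : ℕ} (hi : i ≤ n)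
    {x : EuclideanSpace ℝ (Fin m)} (hx : x ∈ closedBall 0 r) :
    ‖iteratedFDerivWithin ℝ i (fun y => g y * f y) (closedBall 0 r) x‖ ≤
      2 ^ n * K * flatNorm m r n k f * ‖x‖ ^ k := by
  set B := closedBall (0 : EuclideanSpace ℝ (Fin m)) r
  set P := flatNorm m r n k f
  have hK : 0 ≤ K := (mul_nonneg (norm_nonneg _) (by positivity)).trans (hgK 0 (Nat.zero_le n) x)
  have hterm : ∀ l ∈ Finset.range (i + 1), (i.choose l : ℝ) * ‖iteratedFDerivWithin ℝ l g B x‖ *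
      ‖iteratedFDerivWithin ℝ (i - l) f B x‖ ≤ (i.choose l : ℝ) * (K * P * ‖x‖ ^ k) := by
    intro l hl
    have hli : l ≤ i := Nat.lt_succ_iff.1 (Finset.mem_range.1 hl)
    rw [iteratedFDerivWithin_eq_iteratedFDeriv (uniqueDiffOn_closedBall 0 hr)
      (hg.contDiffAt.of_le (by exact_mod_cast le_top)) hx, mul_assoc, mul_assoc]
    refine mul_le_mul_of_nonneg_left ?_ (Nat.cast_nonneg _)
    calc _ ≤ ‖iteratedFDeriv ℝ l g x‖ * (P * ‖x‖ ^ (k + l)) := by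
          gcongr
          exact norm_iteratedFDerivWithin_le_flatNorm_mul_pow_add hr hf (by omega) hx
      _ = ‖iteratedFDeriv ℝ l g x‖ * ‖x‖ ^ l * (P * ‖x‖ ^ k) := by ring
      _ ≤ K * (P * ‖x‖ ^ k) := by
          gcongr
          · exact mul_nonneg flatNorm_nonneg (by positivity)
          · exact hgK l (hli.trans hi) x
  calc _ ≤ ∑ l ∈ Finset.range (i + 1), (i.choose l : ℝ) * ‖iteratedFDerivWithin ℝ l g B x‖ *
          ‖iteratedFDerivWithin ℝ (i - l) f B x‖ :=
        norm_iteratedFDerivWithin_mul_le hg.contDiffOn hf.1 (uniqueDiffOn_closedBall 0 hr) hx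
          (by exact_mod_cast le_top)
    _ ≤ ∑ l ∈ Finset.range (i + 1), (i.choose l : ℝ) * (K * P * ‖x‖ ^ k) :=
        Finset.sum_le_sum hterm
    _ = 2 ^ i * (K * P * ‖x‖ ^ k) := by
        rw [← Finset.sum_mul, ← Nat.cast_sum, Nat.sum_range_choose, Nat.cast_pow, Nat.cast_two]
    _ ≤ 2 ^ n * (K * P * ‖x‖ ^ k) := by
        gcongr
        · exact mul_nonneg (mul_nonneg hK flatNorm_nonneg) (by positivity)
        · norm_num
    _ = 2 ^ n * K * P * ‖x‖ ^ k := by ring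

theorem norm_iteratedFDerivWithin_radial_mul_le_flatNorm_mul_pow (hr : 0 < r)
    (hf : FlatSmoothOnBall m r f) {χ : ℝ → ℝ}
    (hψ : ContDiff ℝ (⊤ : ℕ∞) fun z : EuclideanSpace ℝ (Fin m) => χ ‖z‖) {K : ℝ}
    (hK : ∀ l ≤ n, ∀ z : EuclideanSpace ℝ (Fin m),
      ‖iteratedFDeriv ℝ l (fun z => χ ‖z‖) z‖ * ‖z‖ ^ l ≤ K)
    {c : ℝ} (hc : 0 ≤ c) {i : ℕ} (hi : i ≤ n) {x : EuclideanSpace ℝ (Fin m)}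
    (hx : x ∈ closedBall 0 r) :
    ‖iteratedFDerivWithin ℝ i (fun y => χ (c * ‖y‖) * f y) (closedBall 0 r) x‖ ≤
      2 ^ n * K * flatNorm m r n k f * ‖x‖ ^ k := by
  have hscale : (fun y => χ (c * ‖y‖) * f y) = fun y => χ ‖c • y‖ * f y := by
    simp [norm_smul, abs_of_nonneg hc]
  rw [hscale]
  refine norm_iteratedFDerivWithin_mul_le_flatNorm_mul_pow (g := fun y => χ ‖c • y‖) hr hf
    (hψ.comp (contDiff_const_smul c)) (fun l hl y => ?_) hi hx
  rw [norm_iteratedFDeriv_comp_smul_mul_pow (hψ.of_le (by exact_mod_cast le_top)) c y]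
  exact hK l hl (c • y)

end Multiplier

theorem iteratedFDerivWithin_radial_mul_eq_zero {E : Type*} [NormedAddCommGroup E]
    [NormedSpace ℝ E] {χ : ℝ → ℝ} {f : E → ℝ} {c : ℝ} {x : E} (hχ : χ =ᶠ[𝓝 (c * ‖x‖)] 0)
    (s : Set E) (i : ℕ) :
    iteratedFDerivWithin ℝ i (fun y => χ (c * ‖y‖) * f y) s x = 0 := by
  refine iteratedFDerivWithin_eq_zero_of_eventuallyEq_zero ?_ i
  have hcont : Continuous fun y : E => c * ‖y‖ := by fun_prop
  filter_upwards [hcont.continuousAt.eventually hχ] with y hy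
  simp [hy]

section Estimates

variable {m : ℕ} {r : ℝ} {n k : ℕ} {f : EuclideanSpace ℝ (Fin m) → ℝ} {χ : ℝ → ℝ} {K : ℝ}

theorem flatNorm_radial_mul_le_of_eq_zero_of_le_one (hr : 0 < r) (hf : FlatSmoothOnBall m r f)
    (hψ : ContDiff ℝ (⊤ : ℕ∞) fun z : EuclideanSpace ℝ (Fin m) => χ ‖z‖)
    (hK : ∀ l ≤ n, ∀ z : EuclideanSpace ℝ (Fin m),
      ‖iteratedFDeriv ℝ l (fun z => χ ‖z‖) z‖ * ‖z‖ ^ l ≤ K)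
    (hχ0 : ∀ u ≤ 1, χ u = 0) {c : ℝ} (hc : 0 < c) (j : ℕ) :
    flatNorm m r n (k + j) (fun x => χ (c * ‖x‖) * f x) ≤
      2 ^ n * K * c ^ j * flatNorm m r n k f := by
  have hK0 : 0 ≤ K := (mul_nonneg (norm_nonneg _) (by positivity)).trans (hK 0 (Nat.zero_le n) 0)
  have hP : 0 ≤ flatNorm m r n k f := flatNorm_nonneg
  refine flatNorm_le_of_forall_le (by positivity) fun x hx _ i hi => ?_
  rcases lt_or_ge (c * ‖x‖) 1 with hsmall | hlarge
  · have hχ : χ =ᶠ[𝓝 (c * ‖x‖)] 0 := by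
      filter_upwards [Iio_mem_nhds hsmall] with u hu
      exact hχ0 u (le_of_lt hu)
    rw [iteratedFDerivWithin_radial_mul_eq_zero hχ, norm_zero]
    positivity
  calc _ ≤ 2 ^ n * K * flatNorm m r n k f * ‖x‖ ^ k :=
        norm_iteratedFDerivWithin_radial_mul_le_flatNorm_mul_pow hr hf hψ hK hc.le hi hx
    _ ≤ 2 ^ n * K * flatNorm m r n k f * ‖x‖ ^ k * (c * ‖x‖) ^ j :=
        le_mul_of_one_le_right (by positivity) (one_le_pow₀ hlarge)
    _ = 2 ^ n * K * c ^ j * flatNorm m r n k f * ‖x‖ ^ (k + j) := by ring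

theorem flatNorm_radial_mul_le_of_eq_zero_of_two_le (hr : 0 < r) (hf : FlatSmoothOnBall m r f)
    (hψ : ContDiff ℝ (⊤ : ℕ∞) fun z : EuclideanSpace ℝ (Fin m) => χ ‖z‖)
    (hK : ∀ l ≤ n, ∀ z : EuclideanSpace ℝ (Fin m),
      ‖iteratedFDeriv ℝ l (fun z => χ ‖z‖) z‖ * ‖z‖ ^ l ≤ K)
    (hχ2 : ∀ u, 2 ≤ u → χ u = 0) {c : ℝ} (hc : 0 < c) (j : ℕ) :
    flatNorm m r n k (fun x => χ (c * ‖x‖) * f x) ≤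
      2 ^ n * K * (2 / c) ^ j * flatNorm m r n (k + j) f := by
  have hK0 : 0 ≤ K := (mul_nonneg (norm_nonneg _) (by positivity)).trans (hK 0 (Nat.zero_le n) 0)
  have hP : 0 ≤ flatNorm m r n (k + j) f := flatNorm_nonneg
  refine flatNorm_le_of_forall_le (by positivity) fun x hx _ i hi => ?_
  rcases lt_or_ge 2 (c * ‖x‖) with hlarge | hsmall
  · have hχ : χ =ᶠ[𝓝 (c * ‖x‖)] 0 := by
      filter_upwards [Ioi_mem_nhds hlarge] with u hu
      exact hχ2 u (le_of_lt hu)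
    rw [iteratedFDerivWithin_radial_mul_eq_zero hχ, norm_zero]
    positivity
  have hxc : ‖x‖ ≤ 2 / c := (le_div_iff₀' hc).2 hsmall
  calc _ ≤ 2 ^ n * K * flatNorm m r n (k + j) f * ‖x‖ ^ (k + j) :=
        norm_iteratedFDerivWithin_radial_mul_le_flatNorm_mul_pow hr hf hψ hK hc.le hi hx
    _ = 2 ^ n * K * flatNorm m r n (k + j) f * ‖x‖ ^ j * ‖x‖ ^ k := by ring
    _ ≤ 2 ^ n * K * flatNorm m r n (k + j) f * (2 / c) ^ j * ‖x‖ ^ k := by gcongr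
    _ = 2 ^ n * K * (2 / c) ^ j * flatNorm m r n (k + j) f * ‖x‖ ^ k := by ring

end Estimates

theorem weight_smoothing_operators_general (m : ℕ)
    (χ : ℝ → ℝ) (hχsmooth : ContDiff ℝ (⊤ : ℕ∞) χ)
    (hχ0 : ∀ u : ℝ, u ≤ 1 → χ u = 0) (hχ1 : ∀ u : ℝ, 2 ≤ u → χ u = 1)
    (n k j : ℕ) :
    ∃ C : ℝ → ℝ, ContinuousOn C (Set.Ioi 0) ∧
      ∀ r : ℝ, 0 < r → 0 < C r ∧
        ∀ f : EuclideanSpace ℝ (Fin m) → ℝ, FlatSmoothOnBall m r f →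
          ∀ s : ℝ, 0 < s →
            flatNorm m r n (k + j) (fun x => χ (s * ‖x‖ / r) * f x) ≤
              C r * s ^ j * flatNorm m r n k f ∧
            flatNorm m r n k (fun x => χ (s * ‖x‖ / r) * f x - f x) ≤
              C r * s ^ (-(j : ℤ)) * flatNorm m r n (k + j) f := by
  have hψ : ContDiff ℝ (⊤ : ℕ∞) fun z : EuclideanSpace ℝ (Fin m) => χ ‖z‖ :=
    contDiff_comp_norm_of_eq_on_le_one hχsmooth hχ0
  obtain ⟨K₁, hK₁, hψK₁⟩ := exists_norm_iteratedFDeriv_mul_pow_le hψ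
    (fun z hz => hχ1 ‖z‖ hz.le) n
  obtain ⟨K₂, hK₂, hψK₂⟩ := exists_norm_iteratedFDeriv_mul_pow_le (hψ.sub contDiff_const)
    (fun z hz => sub_eq_zero.2 (hχ1 ‖z‖ hz.le)) n
  refine ⟨fun r => 2 ^ n * (K₁ + K₂) * (2 ^ j * r ^ j + (r ^ j)⁻¹), ?_,
    fun r hr => ⟨by positivity, fun f hf s hs => ⟨?_, ?_⟩⟩⟩
  · exact continuousOn_const.mul ((continuous_const.mul (continuous_pow j)).continuousOn.add
      ((continuous_pow j).continuousOn.inv₀ fun r hr => pow_ne_zero j (ne_of_gt hr)))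
  · simp_rw [mul_div_right_comm s]
    calc _ ≤ 2 ^ n * K₁ * (s / r) ^ j * flatNorm m r n k f :=
          flatNorm_radial_mul_le_of_eq_zero_of_le_one hr hf hψ hψK₁ hχ0 (div_pos hs hr) j
      _ = 2 ^ n * K₁ * (r ^ j)⁻¹ * s ^ j * flatNorm m r n k f := by rw [div_pow]; ring
      _ ≤ _ := by
          gcongr
          exacts [flatNorm_nonneg, by linarith, le_add_of_nonneg_left (by positivity)]
  · simp_rw [mul_div_right_comm s, ← sub_one_mul]
    calc _ ≤ 2 ^ n * K₂ * (2 / (s / r)) ^ j * flatNorm m r n (k + j) f :=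
          flatNorm_radial_mul_le_of_eq_zero_of_two_le (χ := fun u => χ u - 1) hr hf
            (hψ.sub contDiff_const) hψK₂ (fun u hu => sub_eq_zero.2 (hχ1 u hu)) (div_pos hs hr) j
      _ = 2 ^ n * K₂ * (2 ^ j * r ^ j) * s ^ (-(j : ℤ)) * flatNorm m r n (k + j) f := by
          rw [zpow_neg, zpow_natCast, div_div_eq_mul_div, div_pow, mul_pow]; ring
      _ ≤ _ := by
          gcongr
          exacts [flatNorm_nonneg, by linarith, le_add_of_nonneg_right (by positivity)]

/-- fix `χ` smooth with `χ ≡ 0` on `(-∞,1]` and `χ ≡ 1` on `[2,∞)`, and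
set `(T_{s,r} f)(x) := χ(s|x|/r) f(x)`. Then for all `n, k, j` there are constants
`C(n,k,j,r) > 0`, depending continuously on `r > 0`, with
`⟨T_{s,r} f⟩_{n,k+j,r} ≤ C s^j ⟨f⟩_{n,k,r}` and
`⟨(T_{s,r} − id) f⟩_{n,k,r} ≤ C s^{-j} ⟨f⟩_{n,k+j,r}` for all flat smooth `f` and all
`s > 0`. -/
theorem weight_smoothing_operators (m : ℕ) (hm : 1 ≤ m)
    (χ : ℝ → ℝ) (hχsmooth : ContDiff ℝ (⊤ : ℕ∞) χ)
    (hχ0 : ∀ u : ℝ, u ≤ 1 → χ u = 0) (hχ1 : ∀ u : ℝ, 2 ≤ u → χ u = 1)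
    (n k j : ℕ) :
    ∃ C : ℝ → ℝ, ContinuousOn C (Set.Ioi 0) ∧
      ∀ r : ℝ, 0 < r → 0 < C r ∧
        ∀ f : EuclideanSpace ℝ (Fin m) → ℝ, FlatSmoothOnBall m r f →
          ∀ s : ℝ, 0 < s →
            flatNorm m r n (k + j) (fun x => χ (s * ‖x‖ / r) * f x) ≤
              C r * s ^ j * flatNorm m r n k f ∧
            flatNorm m r n k (fun x => χ (s * ‖x‖ / r) * f x - f x) ≤
              C r * s ^ (-(j : ℤ)) * flatNorm m r n (k + j) f :=
  weight_smoothing_operators_general m χ hχsmooth hχ0 hχ1 n k j
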